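/- Let q be a prime, 1 < k ≤ q/2, and 1 ≤ p < ∞. For the Reed–Solomon lattice L_{q,k} ⊆ ℤ^q, every nonzero lattice vector v satisfies ‖v‖_p ≥ (2k)^{1/p}. -/

import Mathlib

/-!
Split `v` into its positive and negative parts and read them as multisets `A`, `B` of points
of `𝔽_q`, the point `a i` being repeated `|v i|` times. Membership in `L_{q,k}` says that `A`
and `B` have the same power sums of orders `0, …, k - 1`. If `‖v‖₁ < 2k ≤ q`, the power sum of
order `0` forces `|A| = |B| < k`, and Newton's identities (which only divide by `j < k < q`)
then give equal elementary symmetric functions, so `A` and `B` are the root multisets of the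
same polynomial and `v = 0`. Finally `‖v‖₁ ≤ ‖v‖_p^p` for integer vectors.
-/

open Polynomial

section Newton

variable {R : Type*} [CommRing R]

theorem Multiset.mul_esymm_eq_sum (s : Multiset R) (k : ℕ) :
    k * s.esymm k =
      (-1) ^ (k + 1) * ∑ i ∈ Finset.range k, (-1) ^ i * s.esymm i * (s.map (· ^ (k - i))).sum := by
  classical
  have hpsum (j : ℕ) :
      MvPolynomial.aeval (fun x : s ↦ (x : R)) (MvPolynomial.psum s R j) = (s.map (· ^ j)).sum := by
    simp only [MvPolynomial.psum, map_sum, map_pow, MvPolynomial.aeval_X]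
    rw [Finset.sum_eq_multiset_sum]
    exact congrArg Multiset.sum (Multiset.map_univ s (· ^ j))
  have := congrArg (MvPolynomial.aeval fun x : s ↦ (x : R)) (MvPolynomial.mul_esymm_eq_sum s R k)
  rw [Finset.sum_filter, Finset.Nat.sum_antidiagonal_eq_sum_range_succ_mk, Finset.sum_range_succ,
    if_neg (lt_irrefl k), add_zero] at this
  simp only [map_mul, map_pow, map_neg, map_one, map_sum, map_natCast, apply_ite,
    MvPolynomial.aeval_esymm_eq_multiset_esymm, Multiset.map_univ_coe, hpsum] at this
  rw [this]
  exact congrArg _ (Finset.sum_congr rfl fun i hi ↦ if_pos (Finset.mem_range.mp hi))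

namespace Multiset

variable [IsDomain R]

theorem esymm_eq_of_sum_map_pow_eq {s t : Multiset R} {k : ℕ}
    (hk : ∀ j : ℕ, 0 < j → j < k → (j : R) ≠ 0)
    (h : ∀ j : ℕ, 0 < j → j < k → (s.map (· ^ j)).sum = (t.map (· ^ j)).sum) :
    ∀ j < k, s.esymm j = t.esymm j := by
  intro j
  induction j using Nat.strong_induction_on with
  | _ j ih =>
    intro hj
    rcases Nat.eq_zero_or_pos j with rfl | hj0
    · simp [esymm]
    refine mul_left_cancel₀ (hk j hj0 hj) ?_
    rw [mul_esymm_eq_sum, mul_esymm_eq_sum]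
    congr 1
    refine Finset.sum_congr rfl fun i hi ↦ ?_
    have hi := Finset.mem_range.mp hi
    rw [ih i hi (by omega), h (j - i) (by omega) (by omega)]

theorem eq_of_esymm_eq {s t : Multiset R} (hcard : card s = card t)
    (h : ∀ j ≤ card s, s.esymm j = t.esymm j) : s = t := by
  rw [← roots_multiset_prod_X_sub_C s, ← roots_multiset_prod_X_sub_C t,
    prod_X_sub_X_eq_sum_esymm, prod_X_sub_X_eq_sum_esymm, ← hcard]
  refine congrArg _ (Finset.sum_congr rfl fun j hj ↦ ?_)
  rw [h j (Nat.lt_succ_iff.mp (Finset.mem_range.mp hj))]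

theorem eq_of_sum_map_pow_eq {s t : Multiset R} {k : ℕ} (hcard : card s = card t)
    (hs : card s < k) (hk : ∀ j : ℕ, 0 < j → j < k → (j : R) ≠ 0)
    (h : ∀ j : ℕ, 0 < j → j < k → (s.map (· ^ j)).sum = (t.map (· ^ j)).sum) : s = t :=
  eq_of_esymm_eq hcard fun j hj ↦ esymm_eq_of_sum_map_pow_eq hk h j (by omega)

end Multiset

end Newton

section WeightedMultiset

variable {ι α : Type*} [Fintype ι]

def weightedMultiset (a : ι → α) (w : ι → ℕ) : Multiset α := ∑ i, w i • {a i}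

theorem card_weightedMultiset (a : ι → α) (w : ι → ℕ) :
    Multiset.card (weightedMultiset a w) = ∑ i, w i := by
  simp [weightedMultiset, Multiset.card_sum]

theorem sum_map_weightedMultiset {β : Type*} [AddCommMonoid β] (a : ι → α) (w : ι → ℕ)
    (f : α → β) : ((weightedMultiset a w).map f).sum = ∑ i, w i • f (a i) := by
  rw [weightedMultiset, ← Multiset.coe_mapAddMonoidHom, map_sum, ← Multiset.coe_sumAddMonoidHom,
    map_sum]
  simp [Multiset.nsmul_singleton]

theorem count_weightedMultiset [DecidableEq α] {a : ι → α} (ha : Function.Injective a)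
    (w : ι → ℕ) (i : ι) : (weightedMultiset a w).count (a i) = w i := by
  rw [weightedMultiset, Multiset.count_sum', Finset.sum_eq_single i]
  · simp
  · intro j _ hji
    simp [ha.ne_iff.mpr hji.symm]
  · simp

end WeightedMultiset

theorem two_mul_le_sum_natAbs_of_sum_mul_pow_eq_zero {F ι : Type*} [Field F] [Fintype ι]
    {k : ℕ} (hF : ∀ n : ℕ, 0 < n → n < 2 * k → (n : F) ≠ 0) {a : ι → F}
    (ha : Function.Injective a) {v : ι → ℤ} (hv : v ≠ 0)
    (h : ∀ j < k, ∑ i, (v i : F) * a i ^ j = 0) :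
    2 * k ≤ ∑ i, (v i).natAbs := by
  classical
  by_contra! hlt
  set A := weightedMultiset a fun i ↦ (v i).toNat
  set B := weightedMultiset a fun i ↦ (-v i).toNat
  have hcard_add : Multiset.card A + Multiset.card B < 2 * k := by
    rw [card_weightedMultiset, card_weightedMultiset, ← Finset.sum_add_distrib]
    simpa only [Int.toNat_add_toNat_neg_eq_natAbs] using hlt
  have hpow : ∀ j < k, (A.map (· ^ j)).sum = (B.map (· ^ j)).sum := by
    intro j hj
    rw [← sub_eq_zero, sum_map_weightedMultiset, sum_map_weightedMultiset, ← h j hj,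
      ← Finset.sum_sub_distrib]
    refine Finset.sum_congr rfl fun i _ ↦ ?_
    rw [nsmul_eq_mul, nsmul_eq_mul, ← sub_mul]
    congr 1
    rw [← Int.cast_natCast (R := F), ← Int.cast_natCast (R := F) (-v i).toNat, ← Int.cast_sub,
      Int.toNat_sub_toNat_neg]
  have hcard : Multiset.card A = Multiset.card B := by
    have hle : ∀ m n : ℕ, m + n < 2 * k → (m : F) = n → m ≤ n := fun m n hmn hmn' ↦ by
      by_contra! hnm
      exact hF (m - n) (by omega) (by omega) (by rw [Nat.cast_sub hnm.le, hmn', sub_self])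
    have h0 := hpow 0 (by omega)
    simp only [pow_zero, Multiset.map_const', Multiset.sum_replicate, nsmul_eq_mul, mul_one] at h0
    exact le_antisymm (hle _ _ hcard_add h0) (hle _ _ (by omega) h0.symm)
  have hAB : A = B := Multiset.eq_of_sum_map_pow_eq hcard (by omega)
    (fun j hj hjk ↦ hF j hj (by omega)) fun j _ hjk ↦ hpow j hjk
  refine hv (funext fun i ↦ ?_)
  have hi := congrArg (Multiset.count (a i)) hAB
  rw [count_weightedMultiset ha, count_weightedMultiset ha] at hi
  simp only [Pi.zero_apply]
  omega

theorem Int.natAbs_le_abs_rpow (n : ℤ) {p : ℝ} (hp : 1 ≤ p) : (n.natAbs : ℝ) ≤ |(n : ℝ)| ^ p := by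
  rw [Nat.cast_natAbs, Int.cast_abs]
  rcases eq_or_ne n 0 with rfl | hn
  · simp [Real.zero_rpow (by linarith : p ≠ 0)]
  · exact Real.self_le_rpow_of_one_le (by exact_mod_cast Int.one_le_abs hn) hp

theorem stmt_2_general (q k : ℕ) (hq : q.Prime) (hkq : 2 * k ≤ q)
    (p : ℝ) (hp : 1 ≤ p)
    (a : Fin q → ZMod q) (ha : Function.Bijective a)
    (v : Fin q → ℤ) (hv : v ≠ 0)
    (hmem : ∀ j : ℕ, j ≤ k - 1 → ∑ i, (v i : ZMod q) * a i ^ j = 0) :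
    ((2 * k : ℝ)) ^ (1 / p) ≤ (∑ i, |(v i : ℝ)| ^ p) ^ (1 / p) := by
  have : Fact q.Prime := ⟨hq⟩
  have hchar : ∀ n : ℕ, 0 < n → n < 2 * k → (n : ZMod q) ≠ 0 := fun n hn hnk ↦ by
    rw [Ne, ZMod.natCast_eq_zero_iff]
    exact Nat.not_dvd_of_pos_of_lt hn (by omega)
  have hℓ1 := two_mul_le_sum_natAbs_of_sum_mul_pow_eq_zero hchar ha.injective hv
    fun j hj ↦ hmem j (by omega)
  refine Real.rpow_le_rpow (by positivity) ?_ (by positivity)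
  calc (2 * k : ℝ) ≤ ∑ i, ((v i).natAbs : ℝ) := by exact_mod_cast hℓ1
    _ ≤ ∑ i, |(v i : ℝ)| ^ p := Finset.sum_le_sum fun i _ ↦ (v i).natAbs_le_abs_rpow hp

theorem stmt_2 (q k : ℕ) (hq : q.Prime) (hk : 1 < k) (hkq : 2 * k ≤ q)
    (p : ℝ) (hp : 1 ≤ p)
    (a : Fin q → ZMod q) (ha : Function.Bijective a)
    (v : Fin q → ℤ) (hv : v ≠ 0)
    (hmem : ∀ j : ℕ, j ≤ k - 1 → ∑ i, (v i : ZMod q) * a i ^ j = 0) :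
    ((2 * k : ℝ)) ^ (1 / p) ≤ (∑ i, |(v i : ℝ)| ^ p) ^ (1 / p) :=
  stmt_2_general q k hq hkq p hp a ha v hv hmem
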